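/- arXiv:2312.12822 — 3 statements merged into one kernel-verified Lean document; each statement's English description precedes it below -/
import Mathlib

section
/- The reduced free group RF(n) is nilpotent of class at most n. -/
open scoped commutatorElement


/-- The relations defining the reduced free group `RF(n)`. -/
def rfRels (n : ℕ) : Set (FreeGroup (Fin n)) :=
  {r | ∃ (i : Fin n) (g : FreeGroup (Fin n)),
    r = ⁅FreeGroup.of i, g * FreeGroup.of i * g⁻¹⁆}

/-- The reduced free group `RF(n)`. -/
abbrev ReducedFreeGroup (n : ℕ) : Type := PresentedGroup (rfRels n)

/-!
Write `γₖ G` for `(⊤ : Subgroup G).lowerCentralSeries k`, so that `γ₀ G = G`. We induct on `n`.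
Killing the generator `xᵢ` of `RF(n+1)` leaves a group generated by `n` elements, each commuting
with its conjugates, hence a quotient of `RF(n)`; so `γₙ RF(n+1)` lies in the normal closure of
`xᵢ`. That normal closure is generated by conjugates of `xᵢ`, all of which commute with `xᵢ`.
Thus `γₙ RF(n+1)` commutes with every generator, i.e. it is central, and
`γₙ₊₁ RF(n+1) = ⁅γₙ RF(n+1), RF(n+1)⁆ = 1`.
-/

open Subgroup

section LowerCentralSeries

variable {G H : Type*} [Group G] [Group H]

theorem Subgroup.top_lowerCentralSeries_eq_bot_of_surjective {f : G →* H}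
    (hf : Function.Surjective f) {k : ℕ} (h : (⊤ : Subgroup G).lowerCentralSeries k = ⊥) :
    (⊤ : Subgroup H).lowerCentralSeries k = ⊥ := by
  rw [← map_top_of_surjective f hf, ← map_lowerCentralSeries, h, map_bot]

theorem Subgroup.top_lowerCentralSeries_le_of_quotient {N : Subgroup G} [N.Normal] {k : ℕ}
    (h : (⊤ : Subgroup (G ⧸ N)).lowerCentralSeries k = ⊥) :
    (⊤ : Subgroup G).lowerCentralSeries k ≤ N := by
  rw [← QuotientGroup.ker_mk' N, ← map_eq_bot_iff, map_lowerCentralSeries,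
    map_top_of_surjective _ (QuotientGroup.mk'_surjective N), h]

theorem Subgroup.normalClosure_le_centralizer_of_commute_conj {x : G}
    (hx : ∀ g : G, Commute x (g * x * g⁻¹)) :
    normalClosure {x} ≤ centralizer {x} := by
  refine (closure_le _).mpr fun y hy => ?_
  obtain ⟨_, rfl, hconj⟩ := Group.mem_conjugatesOfSet_iff.mp hy
  obtain ⟨g, rfl⟩ := isConj_iff.mp hconj
  exact mem_centralizer_singleton_iff.mpr (hx g).eq.symm

theorem Subgroup.top_lowerCentralSeries_succ_eq_bot_of_generators {s : Set G}
    (hs : closure s = ⊤) (hcomm : ∀ x ∈ s, ∀ g : G, Commute x (g * x * g⁻¹)) {k : ℕ}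
    (hquot : ∀ x ∈ s, (⊤ : Subgroup (G ⧸ normalClosure {x})).lowerCentralSeries k = ⊥) :
    (⊤ : Subgroup G).lowerCentralSeries (k + 1) = ⊥ := by
  rw [lowerCentralSeries_succ, commutator_top_right_eq_bot_iff_le_center, center_eq_iInf hs]
  exact le_iInf₂ fun x hx => (top_lowerCentralSeries_le_of_quotient (hquot x hx)).trans
    (normalClosure_le_centralizer_of_commute_conj (hcomm x hx))

theorem commute_conj_map_of_surjective {f : G →* H} (hf : Function.Surjective f) {x : G}
    (hx : ∀ g : G, Commute x (g * x * g⁻¹)) (h : H) : Commute (f x) (h * f x * h⁻¹) := by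
  obtain ⟨g, rfl⟩ := hf h
  simpa using (hx g).map f

end LowerCentralSeries

namespace ReducedFreeGroup

variable {n : ℕ} {H : Type*} [Group H]

theorem commute_of_conj (i : Fin n) (g : ReducedFreeGroup n) :
    Commute (PresentedGroup.of i) (g * PresentedGroup.of i * g⁻¹) := by
  obtain ⟨c, rfl⟩ := PresentedGroup.mk_surjective _ g
  rw [← commutatorElement_eq_one_iff_commute]
  simpa [PresentedGroup.of] using PresentedGroup.one_of_mem (rels := rfRels n) ⟨i, c, rfl⟩

def lift (y : Fin n → H) (hy : ∀ j (h : H), Commute (y j) (h * y j * h⁻¹)) :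
    ReducedFreeGroup n →* H :=
  PresentedGroup.toGroup (f := y) <| by
    rintro _ ⟨j, g, rfl⟩
    simpa [commutatorElement_eq_one_iff_commute] using hy j (FreeGroup.lift y g)

@[simp]
theorem lift_of (y : Fin n → H) (hy : ∀ j (h : H), Commute (y j) (h * y j * h⁻¹))
    (j : Fin n) :
    lift y hy (PresentedGroup.of j) = y j :=
  PresentedGroup.toGroup.of _

def toQuotientNormalClosure (i : Fin (n + 1)) :
    ReducedFreeGroup n →* ReducedFreeGroup (n + 1) ⧸ normalClosure {PresentedGroup.of i} :=
  lift (fun j => QuotientGroup.mk (PresentedGroup.of (i.succAbove j))) fun _ =>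
    commute_conj_map_of_surjective (QuotientGroup.mk'_surjective _) (commute_of_conj _)

theorem toQuotientNormalClosure_surjective (i : Fin (n + 1)) :
    Function.Surjective (toQuotientNormalClosure i) := by
  set N := normalClosure {(PresentedGroup.of i : ReducedFreeGroup (n + 1))}
  rw [← MonoidHom.range_eq_top, eq_top_iff,
    ← map_top_of_surjective _ (QuotientGroup.mk'_surjective N),
    ← PresentedGroup.closure_range_of, MonoidHom.map_closure, closure_le]
  rintro _ ⟨_, ⟨k, rfl⟩, rfl⟩
  obtain rfl | ⟨j, rfl⟩ := Fin.eq_self_or_eq_succAbove i k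
  · rw [QuotientGroup.mk'_apply,
      (QuotientGroup.eq_one_iff (N := N) _).mpr (subset_normalClosure rfl)]
    exact one_mem _
  · exact ⟨PresentedGroup.of j, lift_of ..⟩

end ReducedFreeGroup

/-- The reduced free group `RF(n)` is nilpotent of class at most `n`:
the `(n+1)`-st term of its lower central series (with the convention `Γ₁ G = G`,
i.e. `lowerCentralSeries G 0 = ⊤` in Mathlib) is trivial. -/
theorem reducedFreeGroup_nilpotent (n : ℕ) :
    (⊤ : Subgroup (ReducedFreeGroup n)).lowerCentralSeries n = ⊥ := by
  induction n with
  | zero =>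
    have : Subsingleton (ReducedFreeGroup 0) := (PresentedGroup.mk_surjective _).subsingleton
    exact Subsingleton.elim _ _
  | succ n ih =>
    refine top_lowerCentralSeries_succ_eq_bot_of_generators
      (PresentedGroup.closure_range_of _) ?_ ?_
    · rintro _ ⟨i, rfl⟩
      exact ReducedFreeGroup.commute_of_conj i
    · rintro _ ⟨i, rfl⟩
      exact top_lowerCentralSeries_eq_bot_of_surjective
        (ReducedFreeGroup.toQuotientNormalClosure_surjective i) ih
end

section
/- The reduced free group RF(2) on generators x_1, x_2 is isomorphic to the discrete Heisenberg group: it is generated by x_1, x_2 with [x_1,x_2] central, and it is nilpotent of class 2 with center containing [x_1, x_2]. -/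
open scoped commutatorElement

/-!
In `RF(2)` each generator commutes with its conjugates, so `x₀` commutes with `x₁ x₀⁻¹ x₁⁻¹` and
`x₁` with `x₀ x₁ x₀⁻¹`; hence `⁅x₀, x₁⁆ = x₀ (x₁ x₀⁻¹ x₁⁻¹) = (x₀ x₁ x₀⁻¹) x₁⁻¹` commutes with both
generators and is central. Modulo the centre the two generators commute, so the class is at most `2`.
The commutator is nontrivial: `x₀ ↦ j`, `x₁ ↦ i` respects the relations in the quaternion group `Q₈`
(of class `2`, so every element commutes with its conjugates), and there `⁅j, i⁆ = -1`.
-/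

open Subgroup

section Group

variable {G : Type*} [Group G]

theorem commute_commutatorElement_left_of_commute_conj {a b : G} (h : Commute a (b * a * b⁻¹)) :
    Commute a ⁅a, b⁆ := by
  have hab : ⁅a, b⁆ = a * (b * a * b⁻¹)⁻¹ := by group
  exact hab ▸ (Commute.refl a).mul_right h.inv_right

theorem commute_commutatorElement_right_of_commute_conj {a b : G} (h : Commute b (a * b * a⁻¹)) :
    Commute b ⁅a, b⁆ :=
  commutatorElement_def a b ▸ h.mul_right (Commute.refl b).inv_right

theorem mem_center_of_closure_eq_top {s : Set G} (hs : closure s = ⊤) {c : G}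
    (hc : ∀ a ∈ s, Commute a c) : c ∈ center G := by
  rw [center_eq_iInf hs]
  simp only [mem_iInf, mem_centralizer_singleton_iff]
  exact fun a ha ↦ (hc a ha).eq.symm

theorem isMulCommutative_of_closure_eq_top {s : Set G} (hs : closure s = ⊤)
    (hcomm : ∀ x ∈ s, ∀ y ∈ s, x * y = y * x) : IsMulCommutative G := by
  have hcc : ∀ x : G, x ∈ Set.centralizer (Set.centralizer s) := fun x ↦
    closure_le_centralizer_centralizer s (hs ▸ mem_top x)
  exact ⟨⟨fun x y ↦ Set.centralizer_centralizer_comm_of_comm hcomm x (hcc x) y (hcc y)⟩⟩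

theorem commutator_le_of_closure_eq_top {s : Set G} (hs : closure s = ⊤) {N : Subgroup G}
    [N.Normal] (hN : ∀ a ∈ s, ∀ b ∈ s, ⁅a, b⁆ ∈ N) : commutator G ≤ N := by
  refine Normal.quotient_commutative_iff_commutator_le.mp
    (isMulCommutative_of_closure_eq_top (s := QuotientGroup.mk' N '' s) ?_ ?_)
  · rw [← MonoidHom.map_closure, hs, map_top_of_surjective _ (QuotientGroup.mk'_surjective N)]
  · rintro _ ⟨a, ha, rfl⟩ _ ⟨b, hb, rfl⟩
    rw [← commutatorElement_eq_one_iff_mul_comm, ← map_commutatorElement, QuotientGroup.mk'_apply,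
      QuotientGroup.eq_one_iff]
    exact hN a ha b hb

theorem commutator_le_center_of_closure_pair_eq_top {a b : G} (hs : closure {a, b} = ⊤)
    (hab : ⁅a, b⁆ ∈ center G) : commutator G ≤ center G := by
  refine commutator_le_of_closure_eq_top hs ?_
  rintro x (rfl | rfl) y (rfl | rfl)
  · simp only [commutatorElement_self, one_mem]
  · exact hab
  · rw [← commutatorElement_inv]
    exact inv_mem hab
  · simp only [commutatorElement_self, one_mem]

end Group

theorem quaternionGroup_two_commute_conj (a g : QuaternionGroup 2) : Commute a (g * a * g⁻¹) := by
  rw [← commutatorElement_eq_one_iff_commute]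
  revert a g
  decide

namespace ReducedFreeGroup

theorem commute_conj {n : ℕ} (i : Fin n) (g : ReducedFreeGroup n) :
    Commute (PresentedGroup.of i) (g * PresentedGroup.of i * g⁻¹) := by
  obtain ⟨g, rfl⟩ := PresentedGroup.mk_surjective (rfRels n) g
  have hrel : PresentedGroup.mk (rfRels n) ⁅FreeGroup.of i, g * FreeGroup.of i * g⁻¹⁆ = 1 :=
    (QuotientGroup.eq_one_iff _).mpr (subset_normalClosure ⟨i, g, rfl⟩)
  simpa [map_commutatorElement, commutatorElement_eq_one_iff_commute, PresentedGroup.of] using hrel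

theorem lift_eq_one_of_mem_rfRels {n : ℕ} {H : Type*} [Group H] {f : Fin n → H}
    (hf : ∀ i (h : H), Commute (f i) (h * f i * h⁻¹)) : ∀ r ∈ rfRels n, FreeGroup.lift f r = 1 := by
  rintro _ ⟨i, g, rfl⟩
  simpa [map_commutatorElement, commutatorElement_eq_one_iff_commute] using hf i (FreeGroup.lift f g)

theorem closure_pair_eq_top :
    closure {PresentedGroup.of (rels := rfRels 2) 0, PresentedGroup.of 1} = ⊤ := by
  rw [← PresentedGroup.closure_range_of]
  congr
  ext
  simp [Fin.exists_fin_two, eq_comm]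

theorem commutatorElement_mem_center :
    ⁅PresentedGroup.of (rels := rfRels 2) 0, PresentedGroup.of 1⁆ ∈ center (ReducedFreeGroup 2) := by
  refine mem_center_of_closure_eq_top closure_pair_eq_top ?_
  rintro _ (rfl | rfl)
  · exact commute_commutatorElement_left_of_commute_conj (commute_conj 0 _)
  · exact commute_commutatorElement_right_of_commute_conj (commute_conj 1 _)

theorem commutatorElement_ne_one :
    ⁅PresentedGroup.of (rels := rfRels 2) 0, PresentedGroup.of (rels := rfRels 2) 1⁆ ≠ 1 := by
  let φ : ReducedFreeGroup 2 →* QuaternionGroup 2 := PresentedGroup.toGroup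
    (lift_eq_one_of_mem_rfRels (f := ![.xa 0, .a 1]) fun _ ↦ quaternionGroup_two_commute_conj _)
  intro h
  have hφ := congrArg φ h
  rw [map_commutatorElement, PresentedGroup.toGroup.of, PresentedGroup.toGroup.of, map_one] at hφ
  revert hφ
  decide

end ReducedFreeGroup

/-- The reduced free group `RF(2)` is the discrete Heisenberg group:
it is generated by `x_1, x_2`, the commutator `[x_1,x_2]` is central, and it is
nilpotent of class exactly `2`. -/
theorem reducedFreeGroup_two_heisenberg :
    Subgroup.closure {PresentedGroup.of (rels := rfRels 2) 0, PresentedGroup.of 1} = ⊤ ∧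
    ⁅PresentedGroup.of (rels := rfRels 2) 0, PresentedGroup.of 1⁆ ∈
      Subgroup.center (ReducedFreeGroup 2) ∧
    (⊤ : Subgroup (ReducedFreeGroup 2)).lowerCentralSeries 2 = ⊥ ∧
    (⊤ : Subgroup (ReducedFreeGroup 2)).lowerCentralSeries 1 ≠ ⊥ := by
  have hgen := ReducedFreeGroup.closure_pair_eq_top
  have hcenter := ReducedFreeGroup.commutatorElement_mem_center
  refine ⟨hgen, hcenter, ?_, ?_⟩
  · apply Subgroup.lowerCentralSeries_succ_eq_bot
    rw [top_lowerCentralSeries_one]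
    exact commutator_le_center_of_closure_pair_eq_top hgen hcenter
  · rw [top_lowerCentralSeries_one]
    exact fun h ↦ ReducedFreeGroup.commutatorElement_ne_one <|
      mem_bot.mp (h ▸ commutator_mem_commutator (mem_top _) (mem_top _))
end

section
/- Let A be the normal closure of a subset S of generators in the free group F(n). Then every term (monomial with nonzero coefficient, other than the constant term 1) in the Magnus expansion of any element of the commutator subgroup [A, A] contains at least two occurrences of variables X_s with s ∈ S (counted with multiplicity, possibly the same variable twice). -/
/-- The ring `ℤ⟨⟨X_1,…,X_n⟩⟩` of formal power series in `n` non-commuting variables with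
integer coefficients, realized as coefficient functions on words in the variables. -/
def NC (n : ℕ) : Type := List (Fin n) → ℤ

namespace NC

variable {n : ℕ}

instance : AddCommGroup (NC n) := Pi.addCommGroup

instance : One (NC n) := ⟨fun w => if w = [] then 1 else 0⟩

/-- Convolution (Cauchy) product of non-commutative power series. -/
instance : Mul (NC n) :=
  ⟨fun f g w => ∑ k ∈ Finset.range (w.length + 1), f (w.take k) * g (w.drop k)⟩

theorem mul_apply (f g : NC n) (w : List (Fin n)) :
    (f * g) w = ∑ k ∈ Finset.range (w.length + 1), f (w.take k) * g (w.drop k) := rfl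

theorem one_apply (w : List (Fin n)) : (1 : NC n) w = if w = [] then 1 else 0 := rfl

theorem zero_apply (w : List (Fin n)) : (0 : NC n) w = 0 := rfl

theorem add_apply (f g : NC n) (w : List (Fin n)) : (f + g) w = f w + g w := rfl

protected theorem mul_assoc (f g h : NC n) : f * g * h = f * (g * h) := by
  funext w
  rw [mul_apply, mul_apply]
  calc
    ∑ j ∈ Finset.range (w.length + 1), (f * g) (w.take j) * h (w.drop j)
        = ∑ j ∈ Finset.range (w.length + 1), ∑ i ∈ Finset.range (j + 1),
            f (w.take i) * g ((w.drop i).take (j - i)) * h (w.drop j) := by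
          refine Finset.sum_congr rfl ?_
          intro j hj
          simp only [Finset.mem_range] at hj
          rw [mul_apply, Finset.sum_mul]
          have hlen : (w.take j).length = j := by rw [List.length_take]; omega
          rw [hlen]
          refine Finset.sum_congr rfl ?_
          intro i hi
          simp only [Finset.mem_range] at hi
          have h1 : (w.take j).take i = w.take i := by
            rw [List.take_take]; congr 1; omega
          have h2 : (w.take j).drop i = (w.drop i).take (j - i) := List.drop_take
          rw [h1, h2]
    _ = ∑ i ∈ Finset.range (w.length + 1), ∑ k ∈ Finset.range ((w.length - i) + 1),
            f (w.take i) * g ((w.drop i).take k) * h (w.drop (i + k)) := by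
          rw [Finset.sum_sigma', Finset.sum_sigma']
          refine Finset.sum_nbij' (fun p => ⟨p.2, p.1 - p.2⟩) (fun q => ⟨q.1 + q.2, q.1⟩)
            ?_ ?_ ?_ ?_ ?_
          · rintro ⟨j, i⟩ hp
            simp only [Finset.mem_sigma, Finset.mem_range] at hp ⊢
            omega
          · rintro ⟨i, k⟩ hq
            simp only [Finset.mem_sigma, Finset.mem_range] at hq ⊢
            omega
          · rintro ⟨j, i⟩ hp
            simp only [Finset.mem_sigma, Finset.mem_range] at hp
            have hji : i + (j - i) = j := by omega
            simp [hji]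
          · rintro ⟨i, k⟩ hq
            simp only [Finset.mem_sigma, Finset.mem_range] at hq
            have hik : i + k - i = k := by omega
            simp [hik]
          · rintro ⟨j, i⟩ hp
            simp only [Finset.mem_sigma, Finset.mem_range] at hp
            have : i + (j - i) = j := by omega
            rw [this]
    _ = ∑ i ∈ Finset.range (w.length + 1), f (w.take i) * (g * h) (w.drop i) := by
          refine Finset.sum_congr rfl ?_
          intro i hi
          simp only [Finset.mem_range] at hi
          rw [mul_apply, Finset.mul_sum]
          have hlen : (w.drop i).length = w.length - i := by rw [List.length_drop]
          rw [hlen]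
          refine Finset.sum_congr rfl ?_
          intro k hk
          rw [List.drop_drop]
          ring_nf

protected theorem one_mul (f : NC n) : 1 * f = f := by
  funext w
  rw [mul_apply]
  rw [Finset.sum_eq_single 0]
  · simp [one_apply]
  · intro b hb hb0
    rw [one_apply]
    rw [if_neg, zero_mul]
    intro hnil
    rcases List.take_eq_nil_iff.mp hnil with h | h
    · exact hb0 h
    · subst h; simp at hb; exact hb0 hb
  · intro h; simp at h

protected theorem mul_one (f : NC n) : f * 1 = f := by
  funext w
  rw [mul_apply]
  rw [Finset.sum_eq_single w.length]
  · simp [one_apply]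
  · intro b hb hbne
    rw [one_apply, if_neg, mul_zero]
    intro hnil
    have := List.drop_eq_nil_iff.mp hnil
    simp at hb
    omega
  · intro h; simp at h

instance instRing : Ring (NC n) where
  __ := (inferInstance : AddCommGroup (NC n))
  mul := (· * ·)
  one := 1
  mul_assoc := NC.mul_assoc
  one_mul := NC.one_mul
  mul_one := NC.mul_one
  left_distrib f g h := by
    funext w
    simp [mul_apply, add_apply, mul_add, Finset.sum_add_distrib]
  right_distrib f g h := by
    funext w
    simp [mul_apply, add_apply, add_mul, Finset.sum_add_distrib]
  zero_mul f := by
    funext w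
    simp [mul_apply, zero_apply]
  mul_zero f := by
    funext w
    simp [mul_apply, zero_apply]

/-- The variable `X_i` as a power series. -/
def X (i : Fin n) : NC n := fun w => if w = [i] then 1 else 0

/-- The geometric series `1 - X_i + X_i² - X_i³ + ⋯`. -/
def geom (i : Fin n) : NC n :=
  fun w => if ∀ j ∈ w, j = i then (-1) ^ w.length else 0

theorem val_inv (i : Fin n) : (1 + X i) * geom i = 1 := by
  funext w
  rw [mul_apply]
  cases w with
  | nil => simp [one_apply, add_apply, X, geom]
  | cons a t =>
    rw [one_apply, if_neg (by simp)]
    rw [Finset.sum_eq_add 0 1 (by omega)]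
    · have h0 : ((a :: t).take 0) = ([] : List (Fin n)) := rfl
      have h1 : ((a :: t).take 1) = [a] := rfl
      rw [h0, h1]
      simp only [List.drop_zero, List.drop_one]
      by_cases hai : a = i
      · subst hai
        simp only [add_apply, one_apply, X, geom]
        by_cases ht : ∀ j ∈ t, j = a
        · simp [ht, pow_succ]
          convert neg_add_cancel ((-1 : ℤ) ^ t.length) using 2 <;> exact if_pos ht
        · have hat : ¬ ∀ j ∈ (a :: t), j = a := by simp [ht]
          simp [ht, hat]
      · simp only [add_apply, one_apply, X, geom]
        have h2 : ¬ ∀ j ∈ (a :: t), j = i := by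
          intro hc; exact hai (hc a (by simp))
        have h3 : ¬ ([a] = [i]) := by simp [hai]
        simp [h2, h3]
        exact fun hc => absurd hc hai
    · intro c hc ⟨hc0, hc1⟩
      simp only [Finset.mem_range, List.length_cons] at hc
      have : ((a :: t).take c) ≠ [] ∧ ((a :: t).take c) ≠ [i] := by
        constructor
        · simp [List.take_eq_nil_iff, hc0]
        · intro hcon
          have := congrArg List.length hcon
          simp [List.length_take] at this
          omega
      simp [add_apply, one_apply, X, this.1, this.2]
    · intro h; simp at h
    · intro h; simp at h

theorem inv_val (i : Fin n) : geom i * (1 + X i) = 1 := by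
  funext w
  rw [mul_apply]
  rcases List.eq_nil_or_concat w with hw | ⟨t, a, hw⟩
  · subst hw; simp [one_apply, add_apply, X, geom]
  · rw [List.concat_eq_append] at hw
    subst hw
    rw [one_apply, if_neg (by simp)]
    have hlen : (t ++ [a]).length = t.length + 1 := by simp
    rw [Finset.sum_eq_add t.length (t.length + 1) (by omega)]
    · have h1 : (t ++ [a]).take t.length = t := List.take_left
      have h2 : (t ++ [a]).drop t.length = [a] := List.drop_left
      have h3 : (t ++ [a]).take (t.length + 1) = t ++ [a] := by
        rw [List.take_of_length_le (by simp)]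
      have h4 : (t ++ [a]).drop (t.length + 1) = [] := by
        rw [List.drop_of_length_le (by simp)]
      rw [h1, h2, h3, h4]
      have e1 : ((1 : NC n) + X i) [a] = if a = i then 1 else 0 := by
        by_cases h : a = i <;> simp [add_apply, one_apply, X, h]
      have e2 : ((1 : NC n) + X i) [] = 1 := by
        simp [add_apply, one_apply, X]
      rw [e1, e2, mul_one]
      by_cases ha : a = i
      · rw [if_pos ha, mul_one]
        by_cases ht : ∀ j ∈ t, j = i
        · have hw' : ∀ j ∈ t ++ [a], j = i := by
            intro j hj
            rcases List.mem_append.mp hj with h | h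
            · exact ht j h
            · simp only [List.mem_singleton] at h
              rw [h, ha]
          simp only [geom, if_pos ht, if_pos hw', hlen, pow_succ]
          ring
        · have hw' : ¬ ∀ j ∈ t ++ [a], j = i :=
            fun hc => ht fun j hj => hc j (List.mem_append_left _ hj)
          simp only [geom, if_neg ht, if_neg hw']
          ring
      · rw [if_neg ha, mul_zero, zero_add]
        have hw' : ¬ ∀ j ∈ t ++ [a], j = i :=
          fun hc => ha (hc a (List.mem_append_right t (by simp)))
        simp only [geom, if_neg hw']
    · intro c hc ⟨hc0, hc1⟩
      simp only [Finset.mem_range, hlen] at hc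
      have hne : ((t ++ [a]).drop c) ≠ [] ∧ ((t ++ [a]).drop c) ≠ [i] := by
        constructor
        · intro hcon
          have := congrArg List.length hcon
          simp at this
          omega
        · intro hcon
          have := congrArg List.length hcon
          simp at this
          omega
      simp [add_apply, one_apply, X, hne.1, hne.2]
    · intro h
      exact absurd (by simp only [Finset.mem_range, hlen]; omega) h
    · intro h
      exact absurd (by simp only [Finset.mem_range, hlen]; omega) h

/-- `1 + X_i` as a unit of `ℤ⟨⟨X_1,…,X_n⟩⟩`, with inverse `1 - X_i + X_i² - ⋯`. -/
def magnusUnit (i : Fin n) : (NC n)ˣ where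
  val := 1 + X i
  inv := geom i
  val_inv := val_inv i
  inv_val := inv_val i

end NC

/-- The Magnus expansion `F(n) → ℤ⟨⟨X_1,…,X_n⟩⟩ˣ`, `x_i ↦ 1 + X_i`. -/
def magnus (n : ℕ) : FreeGroup (Fin n) →* (NC n)ˣ := FreeGroup.lift NC.magnusUnit

/-- The coefficient of the monomial `X_{u 0} ⋯ X_{u k}` in the Magnus expansion of `w`. -/
def magnusCoeff {n : ℕ} (w : FreeGroup (Fin n)) (u : List (Fin n)) : ℤ :=
  ((magnus n w : (NC n)ˣ) : NC n) u

/-!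
Let `J_k` be the two-sided ideal of series all of whose terms contain at least `k` letters
from `S`, so that `J_k J_m ⊆ J_{k+m}`. The units congruent to `1` modulo an ideal form a normal
subgroup, and `⁅a, b⁆ - 1 = ((a - 1)(b - 1) - (b - 1)(a - 1)) a⁻¹ b⁻¹` shows that the commutator
of units congruent to `1` modulo `J_1` is congruent to `1` modulo `J_2`. The Magnus expansion
sends each `x_s`, `s ∈ S`, to `1 + X_s ∈ 1 + J_1`, hence `A` into `1 + J_1` and `[A, A]` into
`1 + J_2`.
-/

namespace TwoSidedIdeal

variable {R : Type*} [Ring R]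

def congruenceSubgroup (I : TwoSidedIdeal R) : Subgroup Rˣ :=
  (Units.map (I.ringCon.mk' : R →* I.ringCon.Quotient)).ker

instance (I : TwoSidedIdeal R) : I.congruenceSubgroup.Normal := MonoidHom.normal_ker _

theorem mem_congruenceSubgroup {I : TwoSidedIdeal R} {u : Rˣ} :
    u ∈ I.congruenceSubgroup ↔ (u : R) - 1 ∈ I := by
  rw [congruenceSubgroup, MonoidHom.mem_ker, Units.ext_iff, Units.coe_map, Units.val_one,
    MonoidHom.coe_coe, RingCon.coe_mk', ← map_one I.ringCon.mk', RingCon.coe_mk', RingCon.eq,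
    rel_iff]

open scoped commutatorElement in
theorem commutator_congruenceSubgroup_le {I J K : TwoSidedIdeal R}
    (hIJ : ∀ x ∈ I, ∀ y ∈ J, x * y ∈ K) (hJI : ∀ y ∈ J, ∀ x ∈ I, y * x ∈ K) :
    ⁅I.congruenceSubgroup, J.congruenceSubgroup⁆ ≤ K.congruenceSubgroup := by
  refine Subgroup.commutator_le.mpr fun a ha b hb => ?_
  rw [mem_congruenceSubgroup] at ha hb ⊢
  have key : ((⁅a, b⁆ : Rˣ) : R) - 1 =
      ((a - 1) * (b - 1) - (b - 1) * (a - 1)) * ((a⁻¹ : Rˣ) * (b⁻¹ : Rˣ)) := by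
    have hab : (a : R) * b * (a⁻¹ : Rˣ) * (b⁻¹ : Rˣ) - b * (a * (a⁻¹ : Rˣ)) * (b⁻¹ : Rˣ) =
        ((a - 1) * (b - 1) - (b - 1) * (a - 1)) * ((a⁻¹ : Rˣ) * (b⁻¹ : Rˣ)) := by
      noncomm_ring
    rwa [Units.mul_inv, mul_one, Units.mul_inv, ← Units.val_mul, ← Units.val_mul,
      ← Units.val_mul, ← commutatorElement_def] at hab
  rw [key]
  exact K.mul_mem_right _ _ (K.sub_mem (hIJ _ ha _ hb) (hJI _ hb _ ha))

end TwoSidedIdeal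

namespace NC

variable {n : ℕ}

theorem mul_apply_eq_zero_of_countP_lt (p : Fin n → Bool) {f g : NC n} {k m : ℕ}
    (hf : ∀ u : List (Fin n), u.countP p < k → f u = 0)
    (hg : ∀ u : List (Fin n), u.countP p < m → g u = 0)
    (u : List (Fin n)) (hu : u.countP p < k + m) : (f * g) u = 0 := by
  refine Finset.sum_eq_zero fun i _ => ?_
  have hsplit : (u.take i).countP p + (u.drop i).countP p = u.countP p := by
    rw [← List.countP_append, List.take_append_drop]
  by_cases hi : (u.take i).countP p < k
  · rw [hf _ hi, zero_mul]
  · rw [hg _ (by omega), mul_zero]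

def filtration (p : Fin n → Bool) (k : ℕ) : TwoSidedIdeal (NC n) :=
  .mk' {f | ∀ u : List (Fin n), u.countP p < k → f u = 0} (fun _ _ => rfl)
    (fun hf hg u hu => by rw [add_apply, hf u hu, hg u hu, add_zero])
    (fun hf u hu => neg_eq_zero.mpr (hf u hu))
    (fun hg u hu => mul_apply_eq_zero_of_countP_lt p (k := 0)
      (fun _ h => absurd h (Nat.not_lt_zero _)) hg u (by omega))
    (fun hf u hu => mul_apply_eq_zero_of_countP_lt p (m := 0) hf
      (fun _ h => absurd h (Nat.not_lt_zero _)) u (by omega))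

theorem mem_filtration {p : Fin n → Bool} {k : ℕ} {f : NC n} :
    f ∈ filtration p k ↔ ∀ u : List (Fin n), u.countP p < k → f u = 0 :=
  TwoSidedIdeal.mem_mk' ..

theorem mul_mem_filtration {p : Fin n → Bool} {k m : ℕ} {f g : NC n}
    (hf : f ∈ filtration p k) (hg : g ∈ filtration p m) : f * g ∈ filtration p (k + m) :=
  mem_filtration.mpr <|
    mul_apply_eq_zero_of_countP_lt p (mem_filtration.mp hf) (mem_filtration.mp hg)

theorem X_mem_filtration_one {p : Fin n → Bool} {i : Fin n} (hi : p i) :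
    X i ∈ filtration p 1 := by
  refine mem_filtration.mpr fun u hu => if_neg ?_
  rintro rfl
  simp [hi] at hu

end NC

theorem coe_magnus_of (n : ℕ) (i : Fin n) : (magnus n (FreeGroup.of i) : NC n) = 1 + NC.X i := by
  rw [magnus, FreeGroup.lift_apply_of]
  rfl

theorem map_magnus_normalClosure_le {n : ℕ} {p : Fin n → Bool} {T : Set (Fin n)}
    (hT : ∀ i ∈ T, p i) :
    (Subgroup.normalClosure (FreeGroup.of '' T)).map (magnus n) ≤
      (NC.filtration p 1).congruenceSubgroup := by
  refine Subgroup.map_le_iff_le_comap.mpr (Subgroup.normalClosure_le_normal ?_)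
  rintro _ ⟨i, hi, rfl⟩
  rw [SetLike.mem_coe, Subgroup.mem_comap, TwoSidedIdeal.mem_congruenceSubgroup, coe_magnus_of,
    add_sub_cancel_left]
  exact NC.X_mem_filtration_one (hT i hi)

/-- Let `A` be the normal closure of `{x_s : s ∈ S}` in the free group `F(n)`.  Every
non-constant term with nonzero coefficient in the Magnus expansion of an element of the
commutator subgroup `[A,A]` contains at least two occurrences (counted with multiplicity)
of variables `X_s` with `s ∈ S`. -/
theorem magnus_commutator_normalClosure (n : ℕ) (S : Finset (Fin n))
    (w : FreeGroup (Fin n))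
    (hw : w ∈ ⁅Subgroup.normalClosure (FreeGroup.of '' (S : Set (Fin n))),
               Subgroup.normalClosure (FreeGroup.of '' (S : Set (Fin n)))⁆) :
    ∀ u : List (Fin n), u ≠ [] → magnusCoeff w u ≠ 0 →
      2 ≤ u.countP (fun j => decide (j ∈ S)) := by
  intro u hu hcoeff
  set N := Subgroup.normalClosure (FreeGroup.of '' (S : Set (Fin n)))
  have hN : N.map (magnus n) ≤ (NC.filtration (fun j => decide (j ∈ S)) 1).congruenceSubgroup :=
    map_magnus_normalClosure_le fun _ hi => decide_eq_true hi
  have hNN : ⁅N, N⁆.map (magnus n) ≤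
      (NC.filtration (fun j => decide (j ∈ S)) 2).congruenceSubgroup := by
    rw [Subgroup.map_commutator]
    exact (Subgroup.commutator_mono hN hN).trans <| TwoSidedIdeal.commutator_congruenceSubgroup_le
      (fun _ hx _ hy => NC.mul_mem_filtration hx hy) (fun _ hy _ hx => NC.mul_mem_filtration hy hx)
  have hwJ₂ := NC.mem_filtration.mp
    (TwoSidedIdeal.mem_congruenceSubgroup.mp (hNN ⟨w, hw, rfl⟩))
  by_contra! hlt
  have hcoeff_sub_one : magnusCoeff w u - (1 : NC n) u = 0 := hwJ₂ u hlt
  rw [NC.one_apply, if_neg hu, sub_zero] at hcoeff_sub_one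
  exact hcoeff hcoeff_sub_one
end
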